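/- Let T be an LTS over a signature {A^r, A^l, ∅} and c^l ∈ A^l such that T contains no transition labelled c^l. Then for all states p, q of T: p ≲cc q in T if and only if p ≲cc q in T⁺_{c^l}(T). Moreover, R is a cc-simulation in T if and only if R ∪ {(u,u)} is a cc-simulation in T⁺_{c^l}(T). -/
import Mathlib


/-- The three kinds of actions in a signature `{A^r, A^l, A^bi}`:
covariant (`A^r`), contravariant (`A^l`) and bivariant (`A^bi`). -/
inductive Kind : Type where
  | cov : Kind
  | con : Kind
  | bi : Kind
deriving DecidableEq

/-- A covariant-contravariant simulation over an LTS with state space `S` and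
signature `sig : Act → Kind`. -/
def IsCCSimK {S Act : Type} (sig : Act → Kind) (tr : S → Act → S → Prop)
    (R : S → S → Prop) : Prop :=
  ∀ p q, R p q →
    ((∀ a, (sig a = Kind.cov ∨ sig a = Kind.bi) →
        ∀ p', tr p a p' → ∃ q', tr q a q' ∧ R p' q') ∧
     (∀ a, (sig a = Kind.con ∨ sig a = Kind.bi) →
        ∀ q', tr q a q' → ∃ p', tr p a p' ∧ R p' q'))

/-- The covariant-contravariant simulation preorder `p ≲cc q` over an LTS with
signature `sig`. -/
def CCLEK {S Act : Type} (sig : Act → Kind) (tr : S → Act → S → Prop) (p q : S) : Prop :=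
  ∃ R, IsCCSimK sig tr R ∧ R p q

/-- The transformation `T⁺_{c^l}`: the states of `T⁺_{c^l}(T)` are those of
`T` (`some p`) plus a fresh state `u` (`none`); all transitions of `T` are
kept, a transition `p →c^l u` is added from each state `p` of `T`, and
`u →b u` for every `b ∈ A^l`. -/
def transPlus {S Act : Type} (sig : Act → Kind) (tr : S → Act → S → Prop) (c : Act) :
    Option S → Act → Option S → Prop
  | some p, a, some p' => tr p a p'
  | some _, a, none => a = c
  | none, b, none => sig b = Kind.con
  | none, _, some _ => False

/-- The relation `R ∪ {(u, u)}` on the states of `T⁺_{c^l}(T)`. -/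
def liftRel {S : Type} (R : S → S → Prop) : Option S → Option S → Prop
  | some p, some q => R p q
  | none, none => True
  | _, _ => False

/-- Let `T` be an LTS over a signature `{A^r, A^l, ∅}` and `c^l ∈ A^l` such
that `T` contains no transition labelled `c^l`.  Then for all states `p`, `q`
of `T`: `p ≲cc q` in `T` iff `p ≲cc q` in `T⁺_{c^l}(T)`.  Moreover, `R` is a
cc-simulation in `T` iff `R ∪ {(u,u)}` is a cc-simulation in `T⁺_{c^l}(T)`. -/
theorem transPlus_preserves_reflects {S Act : Type} [Fintype Act]
    (sig : Act → Kind) (hnobi : ∀ a, sig a ≠ Kind.bi)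
    (tr : S → Act → S → Prop) (c : Act) (hc : sig c = Kind.con)
    (hnoc : ∀ p p', ¬ tr p c p') :
    (∀ p q : S, CCLEK sig tr p q ↔ CCLEK sig (transPlus sig tr c) (some p) (some q)) ∧
    (∀ R : S → S → Prop,
      IsCCSimK sig tr R ↔ IsCCSimK sig (transPlus sig tr c) (liftRel R)) := by

  have covne : ∀ a, (sig a = Kind.cov ∨ sig a = Kind.bi) → a ≠ c := by
    intro a ha heq
    subst heq
    rw [hc] at ha
    rcases ha with h|h <;> exact Kind.noConfusion h
  have key : ∀ R : S → S → Prop,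
      IsCCSimK sig tr R ↔ IsCCSimK sig (transPlus sig tr c) (liftRel R) := by
    intro R
    constructor
    · intro hR
      rintro (_|p) (_|q) hpq
      · refine ⟨?_, ?_⟩
        · rintro a ha (_|p') htr
          · rcases ha with h|h
            · rw [htr] at h; simp at h
            · exact absurd h (hnobi a)
          · exact absurd htr id
        · rintro a _ (_|q') htr
          · exact ⟨none, htr, trivial⟩
          · exact absurd htr id
      · exact absurd hpq id
      · exact absurd hpq id
      · obtain ⟨h1, h2⟩ := hR p q hpq
        refine ⟨?_, ?_⟩
        · rintro a ha (_|p') htr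
          · exact absurd htr (covne a ha)
          · obtain ⟨q', hq', hR'⟩ := h1 a ha p' htr
            exact ⟨some q', hq', hR'⟩
        · rintro a ha (_|q') htr
          · exact ⟨none, htr, trivial⟩
          · obtain ⟨p', hp', hR'⟩ := h2 a ha q' htr
            exact ⟨some p', hp', hR'⟩
    · intro hR p q hpq
      obtain ⟨h1, h2⟩ := hR (some p) (some q) hpq
      refine ⟨?_, ?_⟩
      · intro a ha p' htr
        obtain ⟨q', hq', hR'⟩ := h1 a ha (some p') htr
        cases q' with
        | none => exact absurd hR' id
        | some q' => exact ⟨q', hq', hR'⟩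
      · intro a ha q' htr
        obtain ⟨p', hp', hR'⟩ := h2 a ha (some q') htr
        cases p' with
        | none => exact absurd hR' id
        | some p' => exact ⟨p', hp', hR'⟩
  refine ⟨?_, key⟩
  intro p q
  constructor
  · rintro ⟨R, hR, hpq⟩
    exact ⟨liftRel R, (key R).1 hR, hpq⟩
  · rintro ⟨R', hR', hpq⟩
    refine ⟨fun p q => R' (some p) (some q), ?_, hpq⟩
    intro p q hpq'
    obtain ⟨h1, h2⟩ := hR' (some p) (some q) hpq'
    refine ⟨?_, ?_⟩
    · intro a ha p' htr
      obtain ⟨q', hq', hR2⟩ := h1 a ha (some p') htr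
      cases q' with
      | none => exact absurd hq' (covne a ha)
      | some q' => exact ⟨q', hq', hR2⟩
    · intro a ha q' htr
      obtain ⟨p', hp', hR2⟩ := h2 a ha (some q') htr
      cases p' with
      | none => exact absurd ((show a = c from hp') ▸ htr) (hnoc q q')
      | some p' => exact ⟨p', hp', hR2⟩
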